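/- arXiv:2008.02263 — 7 statements merged into one kernel-verified Lean document; each statement's English description precedes it below -/
import Mathlib

section
/- Let L be a real n×n matrix with L_{ij} ≤ 0 for all i ≠ j and with every row summing to zero. Then all principal minors of L are nonnegative: for every subset S of the index set Fin n, the determinant of the principal submatrix of L obtained by restricting rows and columns to S satisfies det(L[S, S]) ≥ 0. -/
open Matrix Polynomial Finset

/-- Strictly diagonally dominant real matrices (with positive diagonal) have nonzero
determinant. -/
lemma sdd_det_ne_zero {ι : Type*} [Fintype ι] [DecidableEq ι] (M : Matrix ι ι ℝ)
    (h : ∀ i, ∑ j ∈ Finset.univ.erase i, |M i j| < M i i) : M.det ≠ 0 := by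
  intro hdet
  obtain ⟨v, hv, hMv⟩ := (Matrix.exists_mulVec_eq_zero_iff).2 hdet
  have hne : (Finset.univ : Finset ι).Nonempty := by
    rcases isEmpty_or_nonempty ι with hι | hι
    · exact absurd (_root_.funext fun i => (IsEmpty.false i).elim) hv
    · exact Finset.univ_nonempty
  obtain ⟨i, -, hmax⟩ := Finset.exists_max_image Finset.univ (fun i => |v i|) hne
  have hvi : 0 < |v i| := by
    by_contra hle
    push_neg at hle
    apply hv
    funext j
    have := hmax j (Finset.mem_univ j)
    have : |v j| ≤ 0 := le_trans this hle
    simpa using le_antisymm this (abs_nonneg _)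
  have hMvi : M.mulVec v i = 0 := congrFun hMv i
  have hsum : M i i * v i + ∑ j ∈ Finset.univ.erase i, M i j * v j = 0 := by
    have hMvi' : ∑ j, M i j * v j = 0 := by simpa [Matrix.mulVec, dotProduct] using hMvi
    rw [Finset.add_sum_erase _ (fun j => M i j * v j) (Finset.mem_univ i)]
    exact hMvi'
  have hdiag_pos : 0 < M i i :=
    lt_of_le_of_lt (Finset.sum_nonneg fun j _ => abs_nonneg _) (h i)
  have h1 : M i i * |v i| = |M i i * v i| := by
    rw [abs_mul, abs_of_pos hdiag_pos]
  have h2 : |M i i * v i| ≤ ∑ j ∈ Finset.univ.erase i, |M i j| * |v i| := by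
    have : M i i * v i = -∑ j ∈ Finset.univ.erase i, M i j * v j := by linarith
    rw [this, abs_neg]
    refine le_trans (Finset.abs_sum_le_sum_abs _ _) (Finset.sum_le_sum fun j _ => ?_)
    rw [abs_mul]
    exact mul_le_mul_of_nonneg_left (hmax j (Finset.mem_univ j)) (abs_nonneg _)
  have h3 : ∑ j ∈ Finset.univ.erase i, |M i j| * |v i| < M i i * |v i| := by
    rw [← Finset.sum_mul]
    exact mul_lt_mul_of_pos_right (h i) hvi
  linarith

/-- Weakly diagonally dominant real matrices (row sums of absolute values of off-diagonal
entries bounded by the diagonal entry) have nonnegative determinant. -/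
lemma wdd_det_nonneg {ι : Type*} [Fintype ι] [DecidableEq ι] (M : Matrix ι ι ℝ)
    (h : ∀ i, ∑ j ∈ Finset.univ.erase i, |M i j| ≤ M i i) : 0 ≤ M.det := by
  rcases isEmpty_or_nonempty ι with hι | hι
  · simp [Matrix.det_isEmpty]
  set p : Polynomial ℝ := (-M).charpoly with hp
  have hkey : ∀ t : ℝ, p.eval t = (M + t • (1 : Matrix ι ι ℝ)).det := by
    intro t
    rw [hp, Matrix.charpoly, ← Polynomial.coe_evalRingHom, RingHom.map_det]
    congr 1
    ext i j
    rcases eq_or_ne i j with rfl | hij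
    · simp [charmatrix_apply_eq, Matrix.one_apply, add_comm]
    · simp [charmatrix_apply_ne _ _ _ hij, Matrix.one_apply_ne hij]
  have hne : ∀ t : ℝ, 0 < t → p.eval t ≠ 0 := by
    intro t ht
    rw [hkey]
    apply sdd_det_ne_zero
    intro i
    have : ∀ j ∈ Finset.univ.erase i, |(M + t • (1 : Matrix ι ι ℝ)) i j| = |M i j| := by
      intro j hj
      have hij : i ≠ j := (Finset.ne_of_mem_erase hj).symm
      simp [Matrix.add_apply, Matrix.smul_apply, Matrix.one_apply_ne hij]
    rw [Finset.sum_congr rfl this]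
    have : (M + t • (1 : Matrix ι ι ℝ)) i i = M i i + t := by
      simp [Matrix.add_apply, Matrix.smul_apply, Matrix.one_apply_eq]
    rw [this]
    linarith [h i]
  have hmonic : p.Monic := Matrix.charpoly_monic _
  have hdeg : 0 < p.degree := by
    have : p.natDegree = Fintype.card ι := Matrix.charpoly_natDegree_eq_dim _
    rw [Polynomial.natDegree_pos_iff_degree_pos.symm, this]
    exact Fintype.card_pos
  have htop : Filter.Tendsto (fun t => p.eval t) Filter.atTop Filter.atTop :=
    p.tendsto_atTop_of_leadingCoeff_nonneg hdeg (by rw [hmonic.leadingCoeff]; norm_num)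
  have hpos : ∀ t : ℝ, 0 < t → 0 < p.eval t := by
    intro t ht
    by_contra hle
    push_neg at hle
    have hlt : p.eval t < 0 := lt_of_le_of_ne hle (hne t ht)
    obtain ⟨t1, ht1⟩ := (htop.eventually_gt_atTop 0).exists_forall_of_atTop
    have ht1' : 0 < p.eval (max t1 t) := ht1 _ (le_max_left _ _)
    have hseg := intermediate_value_Icc (le_max_right t1 t)
      (p.continuous.continuousOn (s := Set.Icc t (max t1 t)))
    have h0mem : (0 : ℝ) ∈ Set.Icc (p.eval t) (p.eval (max t1 t)) :=
      ⟨le_of_lt hlt, le_of_lt ht1'⟩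
    obtain ⟨c, hc, hc0⟩ := hseg h0mem
    exact hne c (lt_of_lt_of_le ht hc.1) hc0
  have h0 : M.det = p.eval 0 := by
    rw [hkey 0]
    simp
  rw [h0]
  have hten : Filter.Tendsto (fun t => p.eval t) (nhdsWithin 0 (Set.Ioi 0))
      (nhds (p.eval 0)) :=
    (p.continuous.tendsto 0).mono_left nhdsWithin_le_nhds
  exact ge_of_tendsto hten (Filter.eventually_of_mem self_mem_nhdsWithin fun t ht => le_of_lt (hpos t ht))

/-- All principal minors of a Laplacian-type matrix `L`
(nonpositive off-diagonal entries, zero row sums) are nonnegative. -/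
theorem laplacian_type_principal_minors_nonneg
    (n : ℕ) (L : Matrix (Fin n) (Fin n) ℝ)
    (hoff : ∀ i j, i ≠ j → L i j ≤ 0)
    (hrow : ∀ i, ∑ j, L i j = 0)
    (S : Finset (Fin n)) :
    0 ≤ (L.submatrix (Subtype.val : {x // x ∈ S} → Fin n)
          (Subtype.val : {x // x ∈ S} → Fin n)).det := by
  apply wdd_det_nonneg
  intro i
  -- the full off-diagonal absolute row sum equals the diagonal entry
  have hfull : ∑ j ∈ Finset.univ.erase (i : Fin n), |L i j| = L i i := by
    have h1 : ∑ j ∈ Finset.univ.erase (i : Fin n), |L i j| =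
        ∑ j ∈ Finset.univ.erase (i : Fin n), (-L i j) := by
      refine Finset.sum_congr rfl fun j hj => ?_
      exact abs_of_nonpos (hoff _ _ (Finset.ne_of_mem_erase hj).symm)
    have h2 : L i i + ∑ j ∈ Finset.univ.erase (i : Fin n), L i j = 0 := by
      rw [Finset.add_sum_erase _ _ (Finset.mem_univ (i : Fin n))]
      exact hrow i
    rw [h1, Finset.sum_neg_distrib]
    linarith
  rw [Matrix.submatrix_apply]
  rw [← hfull]
  -- sum over subtype erase set is bounded by the full erase sum
  have hmap : ∑ j ∈ Finset.univ.erase i, |L.submatrix Subtype.val Subtype.val i j| =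
      ∑ j ∈ (Finset.univ.erase i).map (Function.Embedding.subtype (· ∈ S)),
        |L (i : Fin n) j| := by
    rw [Finset.sum_map]
    rfl
  rw [hmap]
  refine Finset.sum_le_sum_of_subset_of_nonneg ?_ (fun j _ _ => abs_nonneg _)
  intro j hj
  simp only [Finset.mem_map, Finset.mem_erase, Finset.mem_univ, and_true,
    Function.Embedding.coe_subtype] at hj ⊢
  obtain ⟨⟨x, hx⟩, hxne, rfl⟩ := hj
  exact fun hcon => hxne (Subtype.ext hcon)
end

section
/- Let L be a real n×n matrix with L_{ij} ≤ 0 for all i ≠ j and with every row summing to zero, and let M = diag(M_1,…,M_n) and D = diag(D_1,…,D_n) be diagonal matrices with all M_i > 0 and D_i > 0. Then for every real λ > 0, the matrix L + λ·D + λ²·M is invertible, i.e., det(L + λD + λ²M) ≠ 0. Consequently, every real eigenvalue of the associated swing-equation Jacobian J is nonpositive. -/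
open Matrix

/-- For Laplacian-type `L` and positive diagonal `M`, `D`, the pencil
`L + λD + λ²M` is invertible for every real `λ > 0`; consequently every real eigenvalue
of the swing-equation Jacobian `J = [[0, I], [−M⁻¹L, −M⁻¹D]]` is nonpositive. -/
theorem pencil_invertible_pos_real_and_real_eigenvalues_nonpos
    (n : ℕ) (L : Matrix (Fin n) (Fin n) ℝ)
    (hoff : ∀ i j, i ≠ j → L i j ≤ 0)
    (hrow : ∀ i, ∑ j, L i j = 0)
    (Mv Dv : Fin n → ℝ) (hM : ∀ i, 0 < Mv i) (hD : ∀ i, 0 < Dv i)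
    (M D : Matrix (Fin n) (Fin n) ℝ)
    (hMdef : M = Matrix.diagonal Mv) (hDdef : D = Matrix.diagonal Dv)
    (J : Matrix (Fin n ⊕ Fin n) (Fin n ⊕ Fin n) ℝ)
    (hJ : J = Matrix.fromBlocks 0 1 (-(M⁻¹ * L)) (-(M⁻¹ * D))) :
    (∀ lam : ℝ, 0 < lam → (L + lam • D + lam ^ 2 • M).det ≠ 0) ∧
    (∀ r : ℝ, (r : ℂ) ∈ spectrum ℂ (J.map Complex.ofReal) → r ≤ 0) := by
  have key : ∀ lam : ℝ, 0 < lam → (L + lam • D + lam ^ 2 • M).det ≠ 0 := by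
    intro lam hlam
    apply det_ne_zero_of_sum_row_lt_diag
    intro k
    have hsum : ∑ j ∈ Finset.univ.erase k, ‖(L + lam • D + lam ^ 2 • M) k j‖
        = L k k := by
      have h1 : ∀ j ∈ Finset.univ.erase k, ‖(L + lam • D + lam ^ 2 • M) k j‖ = -(L k j) := by
        intro j hj
        have hjk : j ≠ k := Finset.ne_of_mem_erase hj
        simp only [Matrix.add_apply, Matrix.smul_apply, hMdef, hDdef,
          Matrix.diagonal_apply_ne' _ hjk, smul_zero, add_zero, Real.norm_eq_abs]
        exact abs_of_nonpos (hoff k j hjk.symm)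
      rw [Finset.sum_congr rfl h1]
      have := hrow k
      have h2 : ∑ j ∈ Finset.univ.erase k, L k j = -(L k k) := by
        have := Finset.add_sum_erase Finset.univ (fun j => L k j) (Finset.mem_univ k)
        linarith [hrow k]
      rw [Finset.sum_neg_distrib, h2, neg_neg]
    rw [hsum]
    have hdiag : (L + lam • D + lam ^ 2 • M) k k = L k k + lam * Dv k + lam ^ 2 * Mv k := by
      simp [hMdef, hDdef, Matrix.diagonal_apply_eq]
    have hpos : 0 < lam * Dv k + lam ^ 2 * Mv k := by
      have h1 := mul_pos hlam (hD k)
      have h2 := mul_pos (pow_pos hlam 2) (hM k)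
      linarith
    calc L k k < L k k + lam * Dv k + lam ^ 2 * Mv k := by linarith
      _ ≤ ‖(L + lam • D + lam ^ 2 • M) k k‖ := by rw [hdiag]; exact le_abs_self _
  refine ⟨key, ?_⟩
  intro r hr
  by_contra hrpos
  push_neg at hrpos
  have hrne : r ≠ 0 := ne_of_gt hrpos
  -- M is invertible
  have hMdet : M.det ≠ 0 := by
    rw [hMdef, Matrix.det_diagonal]
    exact ne_of_gt (Finset.prod_pos fun i _ => hM i)
  have hMinv : M⁻¹ * M = 1 := Matrix.nonsing_inv_mul M (Ne.isUnit hMdet)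
  -- the real matrix r • 1 - J has nonzero determinant
  have hblocks : r • (1 : Matrix (Fin n ⊕ Fin n) (Fin n ⊕ Fin n) ℝ) - J
      = Matrix.fromBlocks (r • (1 : Matrix (Fin n) (Fin n) ℝ)) (-1) (M⁻¹ * L)
        (r • 1 + M⁻¹ * D) := by
    rw [hJ]
    ext (i | i) (j | j) <;>
      simp [Matrix.one_apply, Matrix.fromBlocks, Matrix.of_apply, Sum.elim_inl, Sum.elim_inr]
  haveI : Invertible (r • (1 : Matrix (Fin n) (Fin n) ℝ)) :=
    invertibleOfRightInverse _ (r⁻¹ • 1) (by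
      rw [smul_mul_assoc, one_mul, smul_smul, mul_inv_cancel₀ hrne, one_smul])
  have hinvOf : ⅟ (r • (1 : Matrix (Fin n) (Fin n) ℝ)) = r⁻¹ • 1 :=
    invOf_eq_right_inv (by
      rw [smul_mul_assoc, one_mul, smul_smul, mul_inv_cancel₀ hrne, one_smul])
  have hschur : (r • 1 + M⁻¹ * D) - (M⁻¹ * L) * ⅟ (r • (1 : Matrix (Fin n) (Fin n) ℝ)) * (-1)
      = M⁻¹ * (r⁻¹ • (L + r • D + r ^ 2 • M)) := by
    rw [hinvOf]
    have e1 : M⁻¹ * (r⁻¹ • (L + r • D + r ^ 2 • M))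
        = r⁻¹ • (M⁻¹ * L) + M⁻¹ * D + r • (M⁻¹ * M) := by
      simp only [Matrix.mul_smul, Matrix.mul_add, smul_add, smul_smul]
      rw [inv_mul_cancel₀ hrne, one_smul, show r⁻¹ * r ^ 2 = r by field_simp]
    rw [e1, hMinv]
    rw [Matrix.mul_smul, Matrix.mul_one, Matrix.mul_neg, Matrix.mul_one, sub_neg_eq_add]
    abel
  have hdetR : (r • (1 : Matrix (Fin n ⊕ Fin n) (Fin n ⊕ Fin n) ℝ) - J).det ≠ 0 := by
    rw [hblocks, Matrix.det_fromBlocks₁₁, hschur, Matrix.det_mul, Matrix.det_smul,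
      Matrix.det_smul, Matrix.det_one, mul_one]
    have h1 : (r : ℝ) ^ Fintype.card (Fin n) ≠ 0 := pow_ne_zero _ hrne
    have h2 : (r⁻¹ : ℝ) ^ Fintype.card (Fin n) ≠ 0 := pow_ne_zero _ (inv_ne_zero hrne)
    have h3 : M⁻¹.det ≠ 0 := by
      rw [Matrix.det_nonsing_inv, Ring.inverse_eq_inv']
      exact inv_ne_zero hMdet
    exact mul_ne_zero h1 (mul_ne_zero h3 (mul_ne_zero h2 (key r hrpos)))
  -- transfer to ℂ
  rw [spectrum.mem_iff] at hr
  apply hr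
  have hmap : algebraMap ℂ (Matrix (Fin n ⊕ Fin n) (Fin n ⊕ Fin n) ℂ) (r : ℂ)
      - J.map Complex.ofReal
      = (r • (1 : Matrix (Fin n ⊕ Fin n) (Fin n ⊕ Fin n) ℝ) - J).map Complex.ofRealHom := by
    ext i j
    simp only [Matrix.sub_apply, Matrix.map_apply, Matrix.algebraMap_matrix_apply,
      Matrix.smul_apply, Matrix.one_apply, smul_eq_mul, Complex.ofRealHom_eq_coe,
      Algebra.algebraMap_self_apply]
    split_ifs <;> push_cast <;> ring
  rw [hmap]
  rw [Matrix.isUnit_iff_isUnit_det, ← RingHom.mapMatrix_apply, ← RingHom.map_det]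
  exact Ne.isUnit (by simpa using hdetR)
end

section
/- Let l, d, m, α, β be real numbers with l ≥ 0, d > 0, m > 0, 2·l·m ≤ d², α ≥ 0, and β ≠ 0, and set λ := α + β·i ∈ ℂ. Then |l + λ·d + λ²·m| > l. In particular, the complex number l + λd + λ²m is nonzero. -/
/-! Writing `z = l + λd + λ²m`, the difference `|z|² - l²` is `β²(d² - 2lm)` plus terms that are
nonnegative because `l, α, d, m ≥ 0`, plus `(αd + (α² - β²)m)² + 4α²β²m²`, which is positive
as soon as `β ≠ 0` and `m ≠ 0`. -/

open Complex

theorem normSq_ofReal_add_mul_add_sq_mul (l d m α β : ℝ) :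
    normSq ((l : ℂ) + (α + β * I) * d + (α + β * I) ^ 2 * m) =
      (l + α * d + (α ^ 2 - β ^ 2) * m) ^ 2 + (β * d + 2 * α * β * m) ^ 2 := by
  simp only [normSq_apply, pow_two, add_re, add_im, mul_re, mul_im, ofReal_re, ofReal_im,
    I_re, I_im]
  ring

theorem sq_add_four_mul_sq_pos {α β m : ℝ} (d : ℝ) (hα : 0 ≤ α) (hβ : β ≠ 0) (hm : m ≠ 0) :
    0 < (α * d + (α ^ 2 - β ^ 2) * m) ^ 2 + 4 * α ^ 2 * β ^ 2 * m ^ 2 := by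
  rcases hα.eq_or_lt with rfl | hα
  -- at `α = 0` the first square is `(β ^ 2 * m) ^ 2`
  · ring_nf; positivity
  · positivity

theorem sq_lt_pencil_re_sq_add_im_sq {l d m α β : ℝ} (hl : 0 ≤ l) (hd : 0 ≤ d) (hm : 0 < m)
    (hC : 2 * l * m ≤ d ^ 2) (hα : 0 ≤ α) (hβ : β ≠ 0) :
    l ^ 2 < (l + α * d + (α ^ 2 - β ^ 2) * m) ^ 2 + (β * d + 2 * α * β * m) ^ 2 := by
  have expand : (l + α * d + (α ^ 2 - β ^ 2) * m) ^ 2 + (β * d + 2 * α * β * m) ^ 2 =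
      l ^ 2 + (β ^ 2 * (d ^ 2 - 2 * l * m) + 2 * l * (α * d + α ^ 2 * m) + 4 * α * β ^ 2 * m * d)
        + ((α * d + (α ^ 2 - β ^ 2) * m) ^ 2 + 4 * α ^ 2 * β ^ 2 * m ^ 2) := by
    ring
  have nonneg :
      0 ≤ β ^ 2 * (d ^ 2 - 2 * l * m) + 2 * l * (α * d + α ^ 2 * m) + 4 * α * β ^ 2 * m * d :=
    add_nonneg (add_nonneg (mul_nonneg (sq_nonneg β) (sub_nonneg.2 hC)) (by positivity))
      (by positivity)
  linarith [sq_add_four_mul_sq_pos d hα hβ hm.ne']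

/-- The key scalar inequality behind the stability certificate:
if `l ≥ 0`, `d > 0`, `m > 0`, `2lm ≤ d²`, `α ≥ 0`, `β ≠ 0` and `λ = α + βi`, then
`|l + λd + λ²m| > l`; in particular `l + λd + λ²m ≠ 0`. -/
theorem scalar_pencil_modulus_gt
    (l d m α β : ℝ) (hl : 0 ≤ l) (hd : 0 < d) (hm : 0 < m)
    (hC : 2 * l * m ≤ d ^ 2) (hα : 0 ≤ α) (hβ : β ≠ 0)
    (lam : ℂ) (hlam : lam = (α : ℂ) + (β : ℂ) * Complex.I) :
    l < ‖(l : ℂ) + lam * d + lam ^ 2 * m‖ ∧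
      (l : ℂ) + lam * d + lam ^ 2 * m ≠ 0 := by
  subst hlam
  have hsq : l ^ 2 < ‖(l : ℂ) + (α + β * I) * d + (α + β * I) ^ 2 * m‖ ^ 2 := by
    rw [Complex.sq_norm, normSq_ofReal_add_mul_add_sq_mul]
    exact sq_lt_pencil_re_sq_add_im_sq hl hd.le hm hC hα hβ
  have hlt := lt_of_pow_lt_pow_left₀ 2 (norm_nonneg _) hsq
  exact ⟨hlt, norm_pos_iff.mp (hl.trans_lt hlt)⟩
end

section
/- Let L be a real n×n matrix with L_{ij} ≤ 0 for all i ≠ j and with every row summing to zero, and let M = diag(M_1,…,M_n) and D = diag(D_1,…,D_n) be diagonal matrices with all M_i > 0 and D_i > 0. Suppose the stability condition (C) holds: L_{ii} ≤ D_i²/(2·M_i) for every i, i.e., 2·M_i·L_{ii} ≤ D_i². Then for every λ ∈ ℂ with Re(λ) ≥ 0 and Im(λ) ≠ 0, the complex matrix L + λ·D + λ²·M (entries coerced to ℂ) is invertible, i.e., det(L + λD + λ²M) ≠ 0. -/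
open Matrix Finset

/-!
By the Levy–Desplanques theorem it suffices that every row of `L + λD + λ²M` is strictly
diagonally dominant. Off the diagonal the pencil agrees with `L`, so since `L` is
Laplacian-type the off-diagonal row sum of absolute values is exactly `L_{kk}`. On the
diagonal sits `z = c + λd + λ²m` with `c = L_{kk}`; writing `λ = p + qi`, one has
`|z|² - c² = (A² - c²) + q²((d² - 2mc) + 2pdm + 2p²m² + q²m²)` with `A = c + pd + p²m ≥ c`,
and condition (C) makes the bracket positive, so `c < |z|`.
-/

lemma Matrix.sum_erase_abs_eq_diag {ι R : Type*} [Fintype ι] [DecidableEq ι]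
    [AddCommGroup R] [LinearOrder R] [IsOrderedAddMonoid R] {L : Matrix ι ι R} {i : ι}
    (hoff : ∀ j, j ≠ i → L i j ≤ 0) (hrow : ∑ j, L i j = 0) :
    ∑ j ∈ univ.erase i, |L i j| = L i i := by
  have hsplit := add_sum_erase univ (L i) (mem_univ i)
  rw [sum_congr rfl fun j hj => abs_of_nonpos (hoff j (ne_of_mem_erase hj)), sum_neg_distrib]
  rw [hrow] at hsplit
  exact neg_eq_of_add_eq_zero_left hsplit

section Pencil

variable {ι : Type*} [DecidableEq ι] (L : Matrix ι ι ℝ) (d m : ι → ℝ) (lam : ℂ)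

lemma pencil_apply_of_ne {i j : ι} (h : i ≠ j) :
    (L.map Complex.ofReal + lam • (diagonal d).map Complex.ofReal +
      lam ^ 2 • (diagonal m).map Complex.ofReal) i j = L i j := by
  simp [diagonal_apply_ne _ h]

lemma pencil_apply_self (i : ι) :
    (L.map Complex.ofReal + lam • (diagonal d).map Complex.ofReal +
      lam ^ 2 • (diagonal m).map Complex.ofReal) i i = L i i + lam * d i + lam ^ 2 * m i := by
  simp

end Pencil

lemma lt_norm_add_mul_add_sq_mul {c d m : ℝ} (hd : 0 ≤ d) (hm : 0 < m)
    (hC : 2 * m * c ≤ d ^ 2) {lam : ℂ} (hp : 0 ≤ lam.re) (hq : lam.im ≠ 0) :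
    c < ‖(c : ℂ) + lam * d + lam ^ 2 * m‖ := by
  rcases lt_or_ge c 0 with hc | hc
  · exact hc.trans_le (norm_nonneg _)
  set p := lam.re
  set q := lam.im
  set z : ℂ := c + lam * d + lam ^ 2 * m
  have hre : z.re = c + p * d + (p ^ 2 - q ^ 2) * m := by
    simp only [z, pow_two, Complex.add_re, Complex.mul_re, Complex.mul_im,
      Complex.ofReal_re, Complex.ofReal_im]
    ring
  have him : z.im = q * (d + 2 * p * m) := by
    simp only [z, pow_two, Complex.add_im, Complex.mul_im, Complex.mul_re,
      Complex.ofReal_re, Complex.ofReal_im]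
    ring
  set A := c + p * d + p ^ 2 * m
  have hA : c ≤ A := by nlinarith [mul_nonneg hp hd, mul_nonneg (sq_nonneg p) hm.le]
  have hnormSq : ‖z‖ ^ 2 - c ^ 2 =
      (A ^ 2 - c ^ 2) + q ^ 2 * ((d ^ 2 - 2 * m * c) + 2 * p * d * m + 2 * p ^ 2 * m ^ 2
        + q ^ 2 * m ^ 2) := by
    rw [Complex.sq_norm, Complex.normSq_apply, hre, him]
    ring
  have hbracket :
      0 < (d ^ 2 - 2 * m * c) + 2 * p * d * m + 2 * p ^ 2 * m ^ 2 + q ^ 2 * m ^ 2 := by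
    have : 0 < q ^ 2 * m ^ 2 := by positivity
    nlinarith [mul_nonneg (mul_nonneg hp hd) hm.le, sq_nonneg (p * m)]
  have hsq : c ^ 2 < ‖z‖ ^ 2 := by
    have : 0 < q ^ 2 := by positivity
    nlinarith [mul_pos this hbracket, pow_le_pow_left₀ hc hA 2]
  exact lt_of_pow_lt_pow_left₀ 2 (norm_nonneg z) hsq

/-- For Laplacian-type `L` and positive diagonal `M`, `D` satisfying
the stability condition (C): `2 M_i L_{ii} ≤ D_i²` for all `i`, the complex pencil
`L + λD + λ²M` is invertible for every `λ` with `Re λ ≥ 0` and `Im λ ≠ 0`. -/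
theorem pencil_invertible_of_condition_C
    (n : ℕ) (L : Matrix (Fin n) (Fin n) ℝ)
    (hoff : ∀ i j, i ≠ j → L i j ≤ 0)
    (hrow : ∀ i, ∑ j, L i j = 0)
    (Mv Dv : Fin n → ℝ) (hM : ∀ i, 0 < Mv i) (hD : ∀ i, 0 < Dv i)
    (M D : Matrix (Fin n) (Fin n) ℝ)
    (hMdef : M = Matrix.diagonal Mv) (hDdef : D = Matrix.diagonal Dv)
    (hC : ∀ i, L i i ≤ (Dv i) ^ 2 / (2 * Mv i))
    (lam : ℂ) (hre : 0 ≤ lam.re) (him : lam.im ≠ 0) :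
    (L.map Complex.ofReal + lam • D.map Complex.ofReal +
      lam ^ 2 • M.map Complex.ofReal).det ≠ 0 := by
  subst hMdef hDdef
  refine det_ne_zero_of_sum_row_lt_diag fun k => ?_
  have hoffSum : ∑ j ∈ univ.erase k,
      ‖(L.map Complex.ofReal + lam • (diagonal Dv).map Complex.ofReal +
        lam ^ 2 • (diagonal Mv).map Complex.ofReal) k j‖ = L k k := by
    rw [← sum_erase_abs_eq_diag (fun j hj => hoff k j hj.symm) (hrow k)]
    refine sum_congr rfl fun j hj => ?_
    rw [pencil_apply_of_ne _ _ _ _ (ne_of_mem_erase hj).symm, Complex.norm_real, Real.norm_eq_abs]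
  have hCk : 2 * Mv k * L k k ≤ Dv k ^ 2 := by
    have := hC k
    rwa [le_div_iff₀ (mul_pos two_pos (hM k)), mul_comm] at this
  rw [hoffSum, pencil_apply_self]
  exact lt_norm_add_mul_add_sq_mul (hD k).le (hM k) hCk hre him
end

section
/- Let L be a real n×n matrix with L_{ij} ≤ 0 for all i ≠ j and with every row summing to zero, let M = diag(M_1,…,M_n) and D = diag(D_1,…,D_n) be diagonal matrices with all M_i > 0 and D_i > 0, and suppose the stability condition (C) holds: L_{ii} ≤ D_i²/(2·M_i) for every i. Let J = [[0, I], [−M⁻¹L, −M⁻¹D]] be the swing-equation Jacobian. Then every complex eigenvalue λ of J with λ ≠ 0 satisfies Re(λ) < 0. -/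
/-!
If `J v = λ v` with `v = (x, y)`, then `y = λ x` and `(λ² M + λ D + L) x = 0` with `x ≠ 0`.
Since the rows of `L` sum to zero and its off-diagonal entries are nonpositive, the Gershgorin
radius of row `k` of this pencil is exactly `L k k`, so for some `k` the number
`w = M_k λ² + D_k λ` lies in the closed disc of radius `L k k` about `-L k k`. Condition (C) is
precisely what excludes such a `w` when `λ ≠ 0` and `Re λ ≥ 0`.
-/

open Matrix

namespace Matrix

variable {n : Type*} [Fintype n] [DecidableEq n]

section Field

variable {K : Type*} [Field K]

theorem exists_mulVec_eq_zero_of_mem_spectrum_fromBlocks_zero_one {A B : Matrix n n K} {μ : K}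
    (h : μ ∈ spectrum K (fromBlocks 0 (1 : Matrix n n K) A B)) :
    ∃ x ≠ 0, (μ ^ 2 • (1 : Matrix n n K) - μ • B - A) *ᵥ x = 0 := by
  rw [← spectrum_toLin', ← Module.End.hasEigenvalue_iff_mem_spectrum] at h
  obtain ⟨v, hv, hv0⟩ := h.exists_hasEigenvector
  rw [Module.End.mem_eigenspace_iff, toLin'_apply, fromBlocks_mulVec] at hv
  set x := v ∘ Sum.inl
  have hy : v ∘ Sum.inr = μ • x := by
    have h := congrArg (· ∘ Sum.inl) hv
    simp only [zero_mulVec, one_mulVec, zero_add, Sum.elim_comp_inl] at h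
    exact h
  have hAB : A *ᵥ x + μ • B *ᵥ x = μ ^ 2 • x := by
    have h := congrArg (· ∘ Sum.inr) hv
    simp only [Sum.elim_comp_inr, hy, mulVec_smul] at h
    rw [h, pow_two, mul_smul, ← hy]
    rfl
  refine ⟨x, fun hx => hv0 ?_, ?_⟩
  · ext (i | i)
    · exact congrFun hx i
    · simpa [hx] using congrFun hy i
  · rw [sub_mulVec, sub_mulVec, smul_mulVec, smul_mulVec, one_mulVec, ← hAB]
    abel

theorem exists_mulVec_eq_zero_of_mem_spectrum_fromBlocks_inv_mul {M D L : Matrix n n K}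
    (hM : IsUnit M.det) {μ : K}
    (h : μ ∈ spectrum K (fromBlocks 0 (1 : Matrix n n K) (-(M⁻¹ * L)) (-(M⁻¹ * D)))) :
    ∃ x ≠ 0, (μ ^ 2 • M + μ • D + L) *ᵥ x = 0 := by
  obtain ⟨x, hx0, hx⟩ := exists_mulVec_eq_zero_of_mem_spectrum_fromBlocks_zero_one h
  refine ⟨x, hx0, ?_⟩
  have hfactor : M * (μ ^ 2 • (1 : Matrix n n K) - μ • -(M⁻¹ * D) - -(M⁻¹ * L))
      = μ ^ 2 • M + μ • D + L := by
    simp [mul_add, mul_nonsing_inv_cancel_left _ _ hM]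
  rw [← hfactor, ← mulVec_mulVec, hx, mulVec_zero]

end Field

theorem map_nonsing_inv {R S : Type*} [CommRing R] [CommRing S] (f : R →+* S)
    {A : Matrix n n R} (h : IsUnit A.det) : A⁻¹.map f = (A.map f)⁻¹ :=
  (inv_eq_left_inv (by
    rw [← Matrix.map_mul, nonsing_inv_mul _ h, Matrix.map_one _ f.map_zero f.map_one])).symm

structure IsLaplacianType (L : Matrix n n ℝ) : Prop where
  offDiag_nonpos : ∀ i j, i ≠ j → L i j ≤ 0
  sum_row_eq_zero : ∀ i, ∑ j, L i j = 0

namespace IsLaplacianType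

variable {L : Matrix n n ℝ}

theorem sum_erase_abs_eq_diag (hL : L.IsLaplacianType) (k : n) :
    ∑ j ∈ Finset.univ.erase k, |L k j| = L k k := by
  have hrow := hL.sum_row_eq_zero k
  rw [← Finset.add_sum_erase _ _ (Finset.mem_univ k)] at hrow
  rw [Finset.sum_congr rfl fun j hj =>
    abs_of_nonpos (hL.offDiag_nonpos k j (Finset.ne_of_mem_erase hj).symm),
    Finset.sum_neg_distrib]
  linarith

theorem exists_norm_add_diag_le_of_mulVec_eq_zero (hL : L.IsLaplacianType) {d : n → ℂ}
    {x : n → ℂ} (hx0 : x ≠ 0) (hx : (diagonal d + L.map (↑)) *ᵥ x = 0) :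
    ∃ k, ‖d k + L k k‖ ≤ L k k := by
  have hzero : Module.End.HasEigenvalue (toLin' (diagonal d + L.map (↑))) 0 :=
    Module.End.hasEigenvalue_of_hasEigenvector
      ⟨Module.End.mem_eigenspace_iff.mpr (by rw [toLin'_apply, hx, zero_smul]), hx0⟩
  obtain ⟨k, hk⟩ := eigenvalue_mem_ball hzero
  refine ⟨k, ?_⟩
  rw [mem_closedBall_iff_norm', sub_zero] at hk
  convert hk using 1
  · simp
  · rw [← hL.sum_erase_abs_eq_diag k]
    refine Finset.sum_congr rfl fun j hj => ?_
    simp [diagonal_apply_ne _ (Finset.ne_of_mem_erase hj).symm]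

end IsLaplacianType

end Matrix

/- With `w = m μ² + d μ = X + i Y`, the hypothesis says `|w + c| ≤ c`, whence
`m |w|² ≤ -2 m c X ≤ -d² X`. But for `Re μ ≥ 0` the quantity `m |w|² + d² X` expands into
nonnegative terms plus `m³ |μ|⁴ > 0`. -/
theorem Complex.re_neg_of_norm_quadratic_le {m d c : ℝ} (hm : 0 < m) (hd : 0 ≤ d)
    (hc : c ≤ d ^ 2 / (2 * m)) {μ : ℂ} (hμ : μ ≠ 0) (h : ‖m * μ ^ 2 + d * μ + c‖ ≤ c) :
    μ.re < 0 := by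
  by_contra! ha
  set a := μ.re
  set b := μ.im
  have hab : 0 < a ^ 2 + b ^ 2 := by
    simpa [Complex.normSq_apply, sq] using Complex.normSq_pos.mpr hμ
  set X := m * (a ^ 2 - b ^ 2) + d * a
  set Y := (2 * m * a + d) * b
  have hc0 : 0 ≤ c := (norm_nonneg _).trans h
  have hdisc : X ^ 2 + Y ^ 2 + 2 * c * X ≤ 0 := by
    have hsq := pow_le_pow_left₀ (norm_nonneg _) h 2
    rw [Complex.sq_norm, Complex.normSq_apply] at hsq
    simp only [Complex.add_re, Complex.add_im, Complex.mul_re, Complex.mul_im,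
      Complex.ofReal_re, Complex.ofReal_im, pow_two] at hsq
    nlinarith
  have hX : X ≤ 0 := by nlinarith [sq_nonneg Y]
  have hcm : 2 * m * c ≤ d ^ 2 := by rwa [le_div_iff₀ (by positivity), mul_comm] at hc
  have hupper : m * (X ^ 2 + Y ^ 2) + d ^ 2 * X ≤ 0 := by
    nlinarith [mul_le_mul_of_nonpos_right hcm hX]
  have hexpand : m * (X ^ 2 + Y ^ 2) + d ^ 2 * X
      = m ^ 3 * (a ^ 2 + b ^ 2) ^ 2 + 2 * m ^ 2 * a * d * (a ^ 2 + b ^ 2)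
        + 2 * m * d ^ 2 * a ^ 2 + d ^ 3 * a := by
    ring
  have hlower : 0 < m * (X ^ 2 + Y ^ 2) + d ^ 2 * X := by
    rw [hexpand]
    have := mul_pos (pow_pos hm 3) (pow_pos hab 2)
    have := mul_nonneg (mul_nonneg (mul_nonneg (pow_pos hm 2).le ha) hd) hab.le
    have := mul_nonneg (mul_nonneg hm.le (sq_nonneg d)) (sq_nonneg a)
    have := mul_nonneg (pow_nonneg hd 3) ha
    linarith
  linarith

/-- For Laplacian-type `L` and positive diagonal `M`, `D` satisfying
the stability condition (C): `L_{ii} ≤ D_i²/(2M_i)`, every nonzero complex eigenvalue of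
the swing-equation Jacobian `J = [[0, I], [−M⁻¹L, −M⁻¹D]]` has negative real part. -/
theorem nonzero_eigenvalues_left_half_plane_of_condition_C
    (n : ℕ) (L : Matrix (Fin n) (Fin n) ℝ)
    (hoff : ∀ i j, i ≠ j → L i j ≤ 0)
    (hrow : ∀ i, ∑ j, L i j = 0)
    (Mv Dv : Fin n → ℝ) (hM : ∀ i, 0 < Mv i) (hD : ∀ i, 0 < Dv i)
    (M D : Matrix (Fin n) (Fin n) ℝ)
    (hMdef : M = Matrix.diagonal Mv) (hDdef : D = Matrix.diagonal Dv)
    (hC : ∀ i, L i i ≤ (Dv i) ^ 2 / (2 * Mv i))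
    (J : Matrix (Fin n ⊕ Fin n) (Fin n ⊕ Fin n) ℝ)
    (hJ : J = Matrix.fromBlocks 0 1 (-(M⁻¹ * L)) (-(M⁻¹ * D)))
    (lam : ℂ) (hlam : lam ∈ spectrum ℂ (J.map Complex.ofReal)) (hne : lam ≠ 0) :
    lam.re < 0 := by
  have hMunit : IsUnit M.det := by
    simp [hMdef, det_diagonal, Finset.prod_ne_zero_iff, (hM _).ne']
  have hMunit_ℂ : IsUnit (M.map Complex.ofReal).det := by
    have h := hMunit.map Complex.ofRealHom
    rwa [RingHom.map_det] at h
  have hJ_ℂ : J.map Complex.ofReal = fromBlocks 0 1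
      (-((M.map Complex.ofReal)⁻¹ * L.map Complex.ofReal))
      (-((M.map Complex.ofReal)⁻¹ * D.map Complex.ofReal)) := by
    have hinv : M⁻¹.map Complex.ofReal = (M.map Complex.ofReal)⁻¹ :=
      map_nonsing_inv Complex.ofRealHom hMunit
    rw [hJ, ← hinv]
    ext (i | i) (j | j) <;> simp [Matrix.mul_apply, Matrix.one_apply, apply_ite Complex.ofReal]
  obtain ⟨x, hx0, hx⟩ :=
    exists_mulVec_eq_zero_of_mem_spectrum_fromBlocks_inv_mul hMunit_ℂ (hJ_ℂ ▸ hlam)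
  have hpencil : lam ^ 2 • M.map Complex.ofReal + lam • D.map Complex.ofReal
      + L.map Complex.ofReal
      = diagonal (fun i => (Mv i : ℂ) * lam ^ 2 + Dv i * lam) + L.map Complex.ofReal := by
    ext i j
    simp only [hMdef, hDdef, Complex.ofReal_zero, diagonal_map, Matrix.add_apply,
      Matrix.smul_apply, diagonal_apply, smul_eq_mul, mul_ite, mul_zero, map_apply, add_left_inj]
    split_ifs <;> ring
  obtain ⟨k, hk⟩ := IsLaplacianType.exists_norm_add_diag_le_of_mulVec_eq_zero ⟨hoff, hrow⟩ hx0
    (hpencil ▸ hx)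
  exact Complex.re_neg_of_norm_quadratic_le (hM k) (hD k).le (hC k) hne hk
end

section
/- Let L be a real n×n matrix (n ≥ 1) with L_{ij} ≤ 0 for all i ≠ j and with every row summing to zero. Define a directed graph on the index set Fin n by putting an arc from i to j whenever i ≠ j and L_{ij} ≠ 0, and suppose this digraph is strongly connected (for all i, j there is a directed path from i to j, i.e., the reflexive-transitive closure of the arc relation relates every pair). Then the kernel of L (as a linear map ℝⁿ → ℝⁿ via v ↦ L·v) is exactly the one-dimensional span of the all-ones vector 𝟙: ker L = ℝ·𝟙. -/
/-!
A vector `v` in the kernel of a Laplacian-type matrix `L` satisfies `∑ⱼ L_{ij} (v_i - v_j) = 0`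
for every row `i`. At an index `i` where `v` attains its maximum, every term of this sum is
nonpositive, hence zero, so `v_j = v_i` along every arc `i → j`. The maximum therefore spreads
along directed paths, and by strong connectivity `v` is constant.
-/

open Matrix

namespace Matrix

variable {ι : Type*} [Fintype ι] {L : Matrix ι ι ℝ} {v : ι → ℝ}

lemma sum_mul_sub_eq (L : Matrix ι ι ℝ) (v : ι → ℝ) (i : ι) :
    ∑ j, L i j * (v i - v j) = (∑ j, L i j) * v i - (L *ᵥ v) i := by
  simp only [mul_sub, Finset.sum_sub_distrib, Finset.sum_mul, mulVec, dotProduct]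

lemma apply_eq_of_mulVec_eq_zero_of_isMax (hoff : ∀ i j, i ≠ j → L i j ≤ 0)
    (hrow : ∀ i, ∑ j, L i j = 0) (hv : L *ᵥ v = 0) {i j : ι} (hmax : ∀ k, v k ≤ v i)
    (hij : L i j ≠ 0) : v j = v i := by
  have hsum : ∑ k, L i k * (v i - v k) = 0 := by
    rw [sum_mul_sub_eq, hrow, hv]; simp
  have hterm : ∀ k ∈ Finset.univ, L i k * (v i - v k) ≤ 0 := by
    intro k _
    rcases eq_or_ne i k with rfl | hik
    · simp
    · exact mul_nonpos_of_nonpos_of_nonneg (hoff i k hik) (sub_nonneg.mpr (hmax k))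
  have hj := (Finset.sum_eq_zero_iff_of_nonpos hterm).mp hsum j (Finset.mem_univ j)
  linarith [(mul_eq_zero.mp hj).resolve_left hij]

lemma apply_eq_of_reflTransGen_of_isMax (hoff : ∀ i j, i ≠ j → L i j ≤ 0)
    (hrow : ∀ i, ∑ j, L i j = 0) (hv : L *ᵥ v = 0) {i j : ι} (hmax : ∀ k, v k ≤ v i)
    (hpath : Relation.ReflTransGen (fun a b => L a b ≠ 0) i j) : v j = v i := by
  induction hpath with
  | refl => rfl
  | tail _ hbc ih =>
    rw [← ih] at hmax ⊢
    exact apply_eq_of_mulVec_eq_zero_of_isMax hoff hrow hv hmax hbc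

lemma apply_eq_apply_of_mulVec_eq_zero (hoff : ∀ i j, i ≠ j → L i j ≤ 0)
    (hrow : ∀ i, ∑ j, L i j = 0)
    (hconn : ∀ i j, Relation.ReflTransGen (fun a b => L a b ≠ 0) i j)
    (hv : L *ᵥ v = 0) (i j : ι) : v i = v j := by
  obtain ⟨m, -, hm⟩ := Finset.exists_max_image Finset.univ v ⟨i, Finset.mem_univ i⟩
  have hmax : ∀ k, v k ≤ v m := fun k => hm k (Finset.mem_univ k)
  rw [apply_eq_of_reflTransGen_of_isMax hoff hrow hv hmax (hconn m i),
    apply_eq_of_reflTransGen_of_isMax hoff hrow hv hmax (hconn m j)]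

end Matrix

lemma mem_span_const_one_of_forall_eq {ι : Type*} {v : ι → ℝ} (hv : ∀ i j, v i = v j) :
    v ∈ Submodule.span ℝ {(fun _ => (1 : ℝ) : ι → ℝ)} := by
  rcases isEmpty_or_nonempty ι with hι | ⟨⟨i⟩⟩
  · rw [Subsingleton.elim v 0]
    exact Submodule.zero_mem _
  · exact Submodule.mem_span_singleton.mpr ⟨v i, funext fun j => by simp [hv i j]⟩

theorem laplacian_kernel_eq_span_ones_of_strongly_connected_general
    (n : ℕ) (L : Matrix (Fin n) (Fin n) ℝ)
    (hoff : ∀ i j, i ≠ j → L i j ≤ 0)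
    (hrow : ∀ i, ∑ j, L i j = 0)
    (hconn : ∀ i j : Fin n,
      Relation.ReflTransGen (fun a b => a ≠ b ∧ L a b ≠ 0) i j) :
    LinearMap.ker L.mulVecLin
      = Submodule.span ℝ {(fun _ => (1 : ℝ) : Fin n → ℝ)} := by
  apply le_antisymm
  · intro v hv
    have hpath i j : Relation.ReflTransGen (fun a b => L a b ≠ 0) i j :=
      Relation.ReflTransGen.mono (fun _ _ h => h.2) _ _ (hconn i j)
    exact mem_span_const_one_of_forall_eq
      (apply_eq_apply_of_mulVec_eq_zero hoff hrow hpath (LinearMap.mem_ker.mp hv))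
  · rw [Submodule.span_le, Set.singleton_subset_iff, SetLike.mem_coe, LinearMap.mem_ker]
    funext i
    simp [mulVec, dotProduct, hrow i]

/-- If `L` is Laplacian-type (nonpositive off-diagonal entries, zero
row sums) and the digraph with an arc `i → j` whenever `i ≠ j` and `L_{ij} ≠ 0` is
strongly connected, then the kernel of `L` is exactly the span of the all-ones
vector `𝟙`. -/
theorem laplacian_kernel_eq_span_ones_of_strongly_connected
    (n : ℕ) (hn : 1 ≤ n) (L : Matrix (Fin n) (Fin n) ℝ)
    (hoff : ∀ i j, i ≠ j → L i j ≤ 0)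
    (hrow : ∀ i, ∑ j, L i j = 0)
    (hconn : ∀ i j : Fin n,
      Relation.ReflTransGen (fun a b => a ≠ b ∧ L a b ≠ 0) i j) :
    LinearMap.ker L.mulVecLin
      = Submodule.span ℝ {(fun _ => (1 : ℝ) : Fin n → ℝ)} :=
  laplacian_kernel_eq_span_ones_of_strongly_connected_general n L hoff hrow hconn
end

section
/- (Spectral form of Theorem 1.) Let n ≥ 1 and consider n generators with voltage magnitudes V_i > 0, admittance magnitudes Y_{ij} ≥ 0 for i ≠ j, and angles θ_{ij}. Let δ* ∈ ℝⁿ satisfy 0 < θ_{ij} − δ*_i + δ*_j < π for all i ≠ j with Y_{ij} ≠ 0 (so the equilibrium lies in Ω), and assume Y_{ij} ≠ 0 ↔ Y_{ji} ≠ 0 for all i ≠ j and that the graph on Fin n with edges {i, j} whenever Y_{ij} ≠ 0 is connected (every pair of indices is related by the reflexive-transitive closure of this edge relation). Let L be the Jacobian of the flow function at δ*, with entries L_{ii} = ∑_{j ≠ i} V_i V_j Y_{ij} sin(θ_{ij} − δ*_i + δ*_j) and L_{ij} = −V_i V_j Y_{ij} sin(θ_{ij} − δ*_i + δ*_j) for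 j ≠ i. Let M_i > 0 and D_i > 0 for all i, and suppose condition (C): ∑_{j ≠ i} V_i V_j Y_{ij} sin(θ_{ij} − δ*_i + δ*_j) ≤ D_i²/(2·M_i) for every i. Then the swing-equation Jacobian J = [[0, I], [−M⁻¹L, −M⁻¹D]] satisfies: (a) every complex eigenvalue λ of J with λ ≠ 0 has Re(λ) < 0; and (b) the real kernel of J is one-dimensional, spanned by (𝟙, 0). -/
/-!
At the equilibrium `L` is the Laplacian of the graph with edge weights
`V_i V_j Y_ij sin(θ_ij - δ*_i + δ*_j) > 0`, and so is `M⁻¹ L` (with weights divided by `M_i`).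
An eigenvector of `J = [[0, I], [-A, -B]]`, `A = M⁻¹ L`, `B = M⁻¹ D`, for `λ` has the form
`(u, λ u)` with `(λ² I + λ B + A) u = 0`. For `λ ≠ 0` with `Re λ ≥ 0`, condition (C) makes
this matrix strictly diagonally dominant, because `|λ² + d λ + k| > k` whenever `2k ≤ d²`;
by Gershgorin it is nonsingular. For `λ = 0` the eigenvector is `(u, 0)` with `L u = 0`, and
on a connected graph the maximum principle forces `u` to be constant.
-/

open Finset Matrix

theorem Complex.lt_norm_sq_add_mul_add {d k : ℝ} (hd : 0 < d) (hdk : 2 * k ≤ d ^ 2) {z : ℂ}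
    (hz : z ≠ 0) (hre : 0 ≤ z.re) : k < ‖z ^ 2 + d * z + k‖ := by
  rcases lt_or_ge k 0 with hk | hk
  · exact hk.trans_le (norm_nonneg _)
  obtain ⟨a, b⟩ := z
  simp only at hre
  have hpos : 0 < a ^ 2 * d ^ 2 + a ^ 2 * b ^ 2 + b ^ 4 := by
    by_cases hb : b = 0
    · have ha : a ≠ 0 := fun ha => hz (Complex.ext (by simpa using ha) (by simpa using hb))
      positivity
    · positivity
  have hnormSq : ‖(⟨a, b⟩ : ℂ) ^ 2 + d * ⟨a, b⟩ + k‖ ^ 2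
      = (a ^ 2 - b ^ 2 + d * a + k) ^ 2 + (2 * a * b + d * b) ^ 2 := by
    rw [Complex.sq_norm, Complex.normSq_apply]
    simp only [Complex.add_re, Complex.add_im, Complex.mul_re, Complex.mul_im, sq,
      Complex.ofReal_re, Complex.ofReal_im]
    ring
  refine lt_of_pow_lt_pow_left₀ 2 (norm_nonneg _) ?_
  rw [hnormSq]
  -- `‖z² + dz + k‖² - k² = |z|² |z + d|² + 2k Re(z² + dz) ≥ (a² + b²)(d² + b²) - 2k b²`,
  -- which `2k ≤ d²` bounds below by `a² d² + a² b² + b⁴ > 0`.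
  nlinarith [mul_nonneg (add_nonneg (sq_nonneg a) (sq_nonneg b))
      (mul_nonneg hre (by linarith : 0 ≤ a + 2 * d)),
    mul_le_mul_of_nonneg_right hdk (sq_nonneg b),
    mul_nonneg hk (mul_nonneg hre (by linarith : 0 ≤ a + d))]

namespace Matrix

section BlockCompanion

variable {n R : Type*} [Fintype n] [DecidableEq n] [CommRing R]

theorem fromBlocks_zero_one_mulVec_eq_smul_iff (A B : Matrix n n R) (μ : R) (u v : n → R) :
    (fromBlocks 0 1 (-A) (-B) : Matrix (n ⊕ n) (n ⊕ n) R) *ᵥ Sum.elim u v = μ • Sum.elim u v ↔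
      v = μ • u ∧ (μ ^ 2 • 1 + μ • B + A) *ᵥ u = 0 := by
  have hsmul : μ • Sum.elim u v = Sum.elim (μ • u) (μ • v) := by ext (i | i) <;> rfl
  rw [fromBlocks_mulVec, hsmul, Sum.elim_eq_iff]
  simp only [Sum.elim_comp_inl, Sum.elim_comp_inr, zero_mulVec, one_mulVec, zero_add, neg_mulVec,
    add_mulVec, smul_mulVec]
  constructor
  · rintro ⟨rfl, h⟩
    refine ⟨rfl, ?_⟩
    rw [mulVec_smul] at h
    linear_combination (norm := module) -h
  · rintro ⟨rfl, h⟩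
    refine ⟨rfl, ?_⟩
    rw [mulVec_smul]
    linear_combination (norm := module) -h

theorem det_eq_zero_of_mem_spectrum_fromBlocks_zero_one {K : Type*} [Field K]
    (A B : Matrix n n K) {μ : K}
    (hμ : μ ∈ spectrum K (fromBlocks 0 1 (-A) (-B) : Matrix (n ⊕ n) (n ⊕ n) K)) :
    (μ ^ 2 • 1 + μ • B + A).det = 0 := by
  rw [← spectrum_toLin', ← Module.End.hasEigenvalue_iff_mem_spectrum] at hμ
  obtain ⟨x, hx⟩ := hμ.exists_hasEigenvector
  rw [← Sum.elim_comp_inl_inr x] at hx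
  obtain ⟨hv, hu⟩ := (fromBlocks_zero_one_mulVec_eq_smul_iff A B μ _ _).1 hx.apply_eq_smul
  refine exists_mulVec_eq_zero_iff.1 ⟨x ∘ Sum.inl, fun h0 => hx.2 ?_, hu⟩
  rw [hv, h0, smul_zero, Sum.elim_zero_zero]

theorem ker_mulVecLin_fromBlocks_zero_one {A : Matrix n n R} (B : Matrix n n R) {c : n → R}
    (hA : LinearMap.ker A.mulVecLin = Submodule.span R {c}) :
    LinearMap.ker (fromBlocks 0 1 (-A) (-B) : Matrix (n ⊕ n) (n ⊕ n) R).mulVecLin =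
      Submodule.span R {Sum.elim c 0} := by
  ext x
  obtain ⟨u, v, rfl⟩ : ∃ u v, x = Sum.elim u v := ⟨_, _, (Sum.elim_comp_inl_inr x).symm⟩
  have hsmul (a : R) : a • Sum.elim c (0 : n → R) = Sum.elim (a • c) 0 := by
    ext (i | i) <;> simp
  rw [LinearMap.mem_ker, mulVecLin_apply, ← zero_smul R (Sum.elim u v),
    fromBlocks_zero_one_mulVec_eq_smul_iff, Submodule.mem_span_singleton]
  simp only [zero_smul, zero_pow two_ne_zero, add_zero, zero_add, hsmul, Sum.elim_eq_iff,
    ← mulVecLin_apply, ← LinearMap.mem_ker, hA, Submodule.mem_span_singleton]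
  constructor
  · rintro ⟨rfl, a, rfl⟩
    exact ⟨a, rfl, rfl⟩
  · rintro ⟨a, rfl, rfl⟩
    exact ⟨rfl, a, rfl⟩

end BlockCompanion

variable {ι R : Type*} [Fintype ι] [DecidableEq ι]

structure IsWeightedLaplacian [Ring R] (L : Matrix ι ι R) (w : ι → ι → R) : Prop where
  diag_eq : ∀ i, L i i = ∑ j ∈ univ.erase i, w i j
  apply_of_ne : ∀ i j, j ≠ i → L i j = -w i j

namespace IsWeightedLaplacian

section CommRing

variable [CommRing R] {L : Matrix ι ι R} {w : ι → ι → R}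

theorem mulVec_apply (hL : IsWeightedLaplacian L w) (u : ι → R) (i : ι) :
    (L *ᵥ u) i = ∑ j ∈ univ.erase i, w i j * (u i - u j) := by
  rw [mulVec, dotProduct, ← add_sum_erase _ _ (mem_univ i), hL.diag_eq, sum_mul,
    ← sum_add_distrib]
  refine sum_congr rfl fun j hj => ?_
  rw [hL.apply_of_ne i j (ne_of_mem_erase hj)]
  ring

theorem diagonal_mul (hL : IsWeightedLaplacian L w) (d : ι → R) :
    IsWeightedLaplacian (diagonal d * L) (fun i j => d i * w i j) where
  diag_eq i := by rw [Matrix.diagonal_mul, hL.diag_eq, mul_sum]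
  apply_of_ne i j hji := by rw [Matrix.diagonal_mul, hL.apply_of_ne i j hji, mul_neg]

end CommRing

variable {L : Matrix ι ι ℝ} {w : ι → ι → ℝ}

theorem apply_eq_of_mulVec_apply_eq_zero (hL : IsWeightedLaplacian L w)
    (hw : ∀ i j, i ≠ j → 0 ≤ w i j) {u : ι → ℝ} {k l : ι} (hu : (L *ᵥ u) k = 0)
    (hmax : ∀ j, u j ≤ u k) (hkl : k ≠ l) (hpos : 0 < w k l) : u l = u k := by
  rw [hL.mulVec_apply, sum_eq_zero_iff_of_nonneg fun j hj =>
    mul_nonneg (hw k j (ne_of_mem_erase hj).symm) (sub_nonneg.2 (hmax j))] at hu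
  have hkl' := hu l (mem_erase.2 ⟨hkl.symm, mem_univ l⟩)
  rw [mul_eq_zero, sub_eq_zero] at hkl'
  exact (hkl'.resolve_left hpos.ne').symm

theorem apply_eq_of_mulVec_eq_zero (hL : IsWeightedLaplacian L w)
    (hw : ∀ i j, i ≠ j → 0 ≤ w i j)
    (hconn : ∀ i j, Relation.ReflTransGen (fun a b => a ≠ b ∧ 0 < w a b) i j)
    {u : ι → ℝ} (hu : L *ᵥ u = 0) (i j : ι) : u i = u j := by
  have : Nonempty ι := ⟨i⟩
  obtain ⟨m, hm⟩ := Finite.exists_max u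
  have hconst : ∀ k, u k = u m := fun k => by
    induction hconn m k with
    | refl => rfl
    | tail _ hab ih =>
      rw [hL.apply_eq_of_mulVec_apply_eq_zero hw (congrFun hu _) (ih ▸ hm) hab.1 hab.2, ih]
  rw [hconst i, hconst j]

theorem ker_mulVecLin (hL : IsWeightedLaplacian L w) (hw : ∀ i j, i ≠ j → 0 ≤ w i j)
    (hconn : ∀ i j, Relation.ReflTransGen (fun a b => a ≠ b ∧ 0 < w a b) i j) :
    LinearMap.ker L.mulVecLin = Submodule.span ℝ {fun _ => 1} := by
  ext u
  rw [LinearMap.mem_ker, mulVecLin_apply, Submodule.mem_span_singleton]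
  constructor
  · intro hu
    rcases isEmpty_or_nonempty ι with _ | ⟨⟨i⟩⟩
    · exact ⟨0, Subsingleton.elim _ _⟩
    · exact ⟨u i, funext fun j => by simp [hL.apply_eq_of_mulVec_eq_zero hw hconn hu i j]⟩
  · rintro ⟨a, rfl⟩
    ext i
    simp [hL.mulVec_apply]

theorem det_diagonal_add_map_ofReal_ne_zero (hL : IsWeightedLaplacian L w)
    (hw : ∀ i j, i ≠ j → 0 ≤ w i j) (d : ι → ℂ) (hd : ∀ i, L i i < ‖d i + L i i‖) :
    (diagonal d + L.map Complex.ofReal).det ≠ 0 := by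
  refine det_ne_zero_of_sum_row_lt_diag fun i => ?_
  have hrow : ∑ j ∈ univ.erase i, ‖(diagonal d + L.map Complex.ofReal) i j‖ = L i i := by
    rw [hL.diag_eq]
    refine sum_congr rfl fun j hj => ?_
    have hji := ne_of_mem_erase hj
    simp [diagonal_apply_ne _ hji.symm, hL.apply_of_ne i j hji, abs_of_nonneg (hw i j hji.symm)]
  rw [hrow]
  simpa using hd i

theorem re_lt_zero_of_mem_spectrum_fromBlocks (hL : IsWeightedLaplacian L w)
    (hw : ∀ i j, i ≠ j → 0 ≤ w i j) {b : ι → ℝ} (hb : ∀ i, 0 < b i)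
    (hLb : ∀ i, 2 * L i i ≤ b i ^ 2) {μ : ℂ}
    (hμ : μ ∈ spectrum ℂ
      ((fromBlocks 0 1 (-L) (-diagonal b) : Matrix (ι ⊕ ι) (ι ⊕ ι) ℝ).map Complex.ofReal))
    (hμ0 : μ ≠ 0) : μ.re < 0 := by
  by_contra! hre
  have hpencil : μ ^ 2 • 1 + μ • (diagonal b).map Complex.ofReal + L.map Complex.ofReal =
      diagonal (fun i => μ ^ 2 + b i * μ) + L.map Complex.ofReal := by
    ext i j
    by_cases hij : i = j
    · subst hij
      simp [mul_comm]
    · simp [hij]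
  simp only [fromBlocks_map, Matrix.map_zero _ Complex.ofReal_zero,
    Matrix.map_one _ Complex.ofReal_zero Complex.ofReal_one,
    Matrix.map_neg _ Complex.ofReal_neg] at hμ
  refine hL.det_diagonal_add_map_ofReal_ne_zero hw _
    (fun i => Complex.lt_norm_sq_add_mul_add (hb i) (hLb i) hμ0 hre) ?_
  rw [← hpencil]
  exact det_eq_zero_of_mem_spectrum_fromBlocks_zero_one _ _ hμ

end IsWeightedLaplacian

end Matrix

theorem swing_equation_stability_certificate_general
    (n : ℕ)
    (V : Fin n → ℝ) (Y θ : Fin n → Fin n → ℝ) (δstar : Fin n → ℝ)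
    (hV : ∀ i, 0 < V i)
    (hY : ∀ i j, i ≠ j → 0 ≤ Y i j)
    (hΩ : ∀ i j, i ≠ j → Y i j ≠ 0 →
      0 < θ i j - δstar i + δstar j ∧ θ i j - δstar i + δstar j < Real.pi)
    (hconn : ∀ i j : Fin n,
      Relation.ReflTransGen (fun a b => a ≠ b ∧ Y a b ≠ 0) i j)
    (L : Matrix (Fin n) (Fin n) ℝ)
    (hLdiag : ∀ k, L k k =
      ∑ j ∈ Finset.univ.erase k, V k * V j * Y k j * Real.sin (θ k j - δstar k + δstar j))
    (hLoff : ∀ k j, j ≠ k →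
      L k j = -(V k * V j * Y k j * Real.sin (θ k j - δstar k + δstar j)))
    (Mv Dv : Fin n → ℝ) (hM : ∀ i, 0 < Mv i) (hD : ∀ i, 0 < Dv i)
    (M D : Matrix (Fin n) (Fin n) ℝ)
    (hMdef : M = Matrix.diagonal Mv) (hDdef : D = Matrix.diagonal Dv)
    (hC : ∀ i, (∑ j ∈ Finset.univ.erase i,
        V i * V j * Y i j * Real.sin (θ i j - δstar i + δstar j))
      ≤ (Dv i) ^ 2 / (2 * Mv i))
    (J : Matrix (Fin n ⊕ Fin n) (Fin n ⊕ Fin n) ℝ)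
    (hJ : J = Matrix.fromBlocks 0 1 (-(M⁻¹ * L)) (-(M⁻¹ * D))) :
    (∀ lam ∈ spectrum ℂ (J.map Complex.ofReal), lam ≠ 0 → lam.re < 0) ∧
    LinearMap.ker J.mulVecLin
      = Submodule.span ℝ {(Sum.elim (fun _ => (1 : ℝ)) 0 : Fin n ⊕ Fin n → ℝ)} := by
  set w : Fin n → Fin n → ℝ := fun i j => V i * V j * Y i j * Real.sin (θ i j - δstar i + δstar j)
  have hwpos : ∀ i j, i ≠ j → Y i j ≠ 0 → 0 < w i j := fun i j hij hYij =>
    mul_pos (mul_pos (mul_pos (hV i) (hV j)) ((hY i j hij).lt_of_ne' hYij))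
      (Real.sin_pos_of_pos_of_lt_pi (hΩ i j hij hYij).1 (hΩ i j hij hYij).2)
  have hMinv : M⁻¹ = diagonal fun i => (Mv i)⁻¹ :=
    inv_eq_left_inv (by simp [hMdef, fun i => (hM i).ne'])
  have hA : IsWeightedLaplacian (M⁻¹ * L) fun i j => (Mv i)⁻¹ * w i j := by
    rw [hMinv]
    exact IsWeightedLaplacian.diagonal_mul ⟨hLdiag, hLoff⟩ _
  have hAw : ∀ i j, i ≠ j → 0 ≤ (Mv i)⁻¹ * w i j := fun i j hij => by
    by_cases hYij : Y i j = 0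
    · simp [w, hYij]
    · exact mul_nonneg (inv_nonneg.2 (hM i).le) (hwpos i j hij hYij).le
  rw [hMinv, hDdef, diagonal_mul_diagonal, ← hMinv] at hJ
  subst hJ
  refine ⟨fun μ hμ hμ0 => hA.re_lt_zero_of_mem_spectrum_fromBlocks hAw
    (fun i => mul_pos (inv_pos.2 (hM i)) (hD i)) (fun i => ?_) hμ hμ0, ?_⟩
  · have hMi := hM i
    have hCi := hC i
    rw [← hLdiag, le_div_iff₀ (by positivity)] at hCi
    rw [hMinv, Matrix.diagonal_mul, mul_pow, inv_pow]
    field_simp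
    nlinarith
  · exact ker_mulVecLin_fromBlocks_zero_one _ (hA.ker_mulVecLin hAw fun i j =>
      Relation.ReflTransGen.mono
        (fun a b h => ⟨h.1, mul_pos (inv_pos.2 (hM a)) (hwpos a b h.1 h.2)⟩) _ _ (hconn i j))

/-- **Spectral form of Theorem 1.** For an equilibrium `δ*` in `Ω` of the
lossy swing equations, with positive voltages, nonnegative admittances, a connected
underlying graph, positive inertias `M_i` and dampings `D_i`, and the stability
condition (C): `∑_{j≠i} V_i V_j Y_{ij} sin(θ_{ij} − δ*_i + δ*_j) ≤ D_i²/(2M_i)`,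
the swing-equation Jacobian `J = [[0, I], [−M⁻¹L, −M⁻¹D]]` has all nonzero complex
eigenvalues in the open left half plane, and its real kernel is spanned by `(𝟙, 0)`. -/
theorem swing_equation_stability_certificate
    (n : ℕ) (hn : 1 ≤ n)
    (V : Fin n → ℝ) (Y θ : Fin n → Fin n → ℝ) (δstar : Fin n → ℝ)
    (hV : ∀ i, 0 < V i)
    (hY : ∀ i j, i ≠ j → 0 ≤ Y i j)
    (hΩ : ∀ i j, i ≠ j → Y i j ≠ 0 →
      0 < θ i j - δstar i + δstar j ∧ θ i j - δstar i + δstar j < Real.pi)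
    (hYsym : ∀ i j, i ≠ j → (Y i j ≠ 0 ↔ Y j i ≠ 0))
    (hconn : ∀ i j : Fin n,
      Relation.ReflTransGen (fun a b => a ≠ b ∧ Y a b ≠ 0) i j)
    (L : Matrix (Fin n) (Fin n) ℝ)
    (hLdiag : ∀ k, L k k =
      ∑ j ∈ Finset.univ.erase k, V k * V j * Y k j * Real.sin (θ k j - δstar k + δstar j))
    (hLoff : ∀ k j, j ≠ k →
      L k j = -(V k * V j * Y k j * Real.sin (θ k j - δstar k + δstar j)))
    (Mv Dv : Fin n → ℝ) (hM : ∀ i, 0 < Mv i) (hD : ∀ i, 0 < Dv i)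
    (M D : Matrix (Fin n) (Fin n) ℝ)
    (hMdef : M = Matrix.diagonal Mv) (hDdef : D = Matrix.diagonal Dv)
    (hC : ∀ i, (∑ j ∈ Finset.univ.erase i,
        V i * V j * Y i j * Real.sin (θ i j - δstar i + δstar j))
      ≤ (Dv i) ^ 2 / (2 * Mv i))
    (J : Matrix (Fin n ⊕ Fin n) (Fin n ⊕ Fin n) ℝ)
    (hJ : J = Matrix.fromBlocks 0 1 (-(M⁻¹ * L)) (-(M⁻¹ * D))) :
    (∀ lam ∈ spectrum ℂ (J.map Complex.ofReal), lam ≠ 0 → lam.re < 0) ∧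
    LinearMap.ker J.mulVecLin
      = Submodule.span ℝ {(Sum.elim (fun _ => (1 : ℝ)) 0 : Fin n ⊕ Fin n → ℝ)} :=
  swing_equation_stability_certificate_general n V Y θ δstar hV hY hΩ hconn L hLdiag hLoff Mv Dv hM
    hD M D hMdef hDdef hC J hJ
end
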